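/- Let A ⊆ B be an algebra extension over a field k. If A is a direct summand of B as a right A-module (equivalently, there exists a right A-linear map E : B → A with E|_A = id_A), then the extension A ⊆ B is right faithfully flatish, i.e. for every left A-module M the map M → B ⊗_A M, m ↦ 1_B ⊗ m, is an isomorphism onto the submodule { Σ_i x_i ⊗ m_i ∈ B ⊗_A M : Σ_i x_i ⊗ 1_B ⊗ m_i = Σ_i 1_B ⊗ x_i ⊗ m_i in B ⊗_A B ⊗_A M }. -/

import Mathlib

/-!
A right `A`-linear `E : B → A` with `E|_A = id` makes `M → B ⊗_A M`, `m ↦ 1 ⊗ m`, a split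
injection with retraction `x ⊗ m ↦ E x • m`. On the equalizer it is also onto: contracting the
equation `Σ xᵢ ⊗ 1 ⊗ mᵢ = Σ 1 ⊗ xᵢ ⊗ mᵢ` along `x ⊗ y ⊗ m ↦ E x y ⊗ m` yields
`Σ xᵢ ⊗ mᵢ = 1 ⊗ Σ E xᵢ • mᵢ`.
-/

open TensorProduct

noncomputable section

universe v

section Extension

variable (k : Type*) [Field k] (B : Type*) [Ring B] [Algebra k B] (A : Subalgebra k B)

/-- The defining relations of the tensor product `B ⊗_A M` of the right `A`-module `B`
with a left `A`-module `M`, inside `B ⊗[k] M`; the tensor product `B ⊗_A M` is the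
corresponding quotient of `B ⊗[k] M`. -/
def modRel (M : Type v) [AddCommGroup M] [Module k M] [Module A M] [IsScalarTower k A M] :
    Submodule k (B ⊗[k] M) :=
  Submodule.span k
    {t : B ⊗[k] M | ∃ (b : B) (a : A) (m : M), t = (b * (a : B)) ⊗ₜ[k] m - b ⊗ₜ[k] (a • m)}

/-- `B` is flat as a right `A`-module: for every injective map `f : M → N` of left `A`-modules,
the induced map `B ⊗_A M → B ⊗_A N` is injective. -/
def IsRightFlatOver : Prop :=
  ∀ (M N : Type v) [AddCommGroup M] [Module k M] [Module A M] [IsScalarTower k A M]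
    [AddCommGroup N] [Module k N] [Module A N] [IsScalarTower k A N]
    (f : M →ₗ[A] N), Function.Injective f →
      Submodule.comap (LinearMap.lTensor B (LinearMap.restrictScalars k f)) (modRel k B A N) ≤
        modRel k B A M

/-- `B` is faithfully flat as a right `A`-module: it is flat, and `B ⊗_A M = 0` implies
`M = 0` for every left `A`-module `M`. -/
def IsRightFaithfullyFlatOver : Prop :=
  IsRightFlatOver.{v} k B A ∧
    ∀ (M : Type v) [AddCommGroup M] [Module k M] [Module A M] [IsScalarTower k A M],
      modRel k B A M = ⊤ → Subsingleton M

/-- The defining relations of `B ⊗_A B ⊗_A M` inside `B ⊗[k] (B ⊗[k] M)`. -/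
def modRel2 (M : Type v) [AddCommGroup M] [Module k M] [Module A M] [IsScalarTower k A M] :
    Submodule k (B ⊗[k] (B ⊗[k] M)) :=
  Submodule.span k
    ({t | ∃ (x : B) (a : A) (y : B) (m : M),
        t = (x * (a : B)) ⊗ₜ[k] (y ⊗ₜ[k] m) - x ⊗ₜ[k] (((a : B) * y) ⊗ₜ[k] m)} ∪
     {t | ∃ (x y : B) (a : A) (m : M),
        t = x ⊗ₜ[k] ((y * (a : B)) ⊗ₜ[k] m) - x ⊗ₜ[k] (y ⊗ₜ[k] (a • m))})

/-- The unit map `M → B ⊗_A M`, `m ↦ 1 ⊗ m`. -/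
def unitMap (M : Type v) [AddCommGroup M] [Module k M] [Module A M] [IsScalarTower k A M] :
    M →ₗ[k] (B ⊗[k] M) ⧸ modRel k B A M :=
  (modRel k B A M).mkQ ∘ₗ (TensorProduct.mk k B M) 1

/-- The map `B ⊗[k] M → B ⊗[k] (B ⊗[k] M)`, `x ⊗ m ↦ x ⊗ 1 ⊗ m - 1 ⊗ x ⊗ m`, whose vanishing
modulo the relations of `B ⊗_A B ⊗_A M` expresses the equality
`Σ xᵢ ⊗ 1 ⊗ mᵢ = Σ 1 ⊗ xᵢ ⊗ mᵢ` in `B ⊗_A B ⊗_A M`. -/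
def diffMap (M : Type v) [AddCommGroup M] [Module k M] [Module A M] [IsScalarTower k A M] :
    B ⊗[k] M →ₗ[k] B ⊗[k] (B ⊗[k] M) :=
  LinearMap.lTensor B ((TensorProduct.mk k B M) 1) - (TensorProduct.mk k B (B ⊗[k] M)) 1

/-- The extension `A ⊆ B` is right faithfully flatish: for every left `A`-module `M`,
the map `m ↦ 1_B ⊗ m` is an isomorphism from `M` onto the submodule
`{Σ xᵢ ⊗ mᵢ ∈ B ⊗_A M | Σ xᵢ ⊗ 1 ⊗ mᵢ = Σ 1 ⊗ xᵢ ⊗ mᵢ in B ⊗_A B ⊗_A M}`. -/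
def IsRightFaithfullyFlatish : Prop :=
  ∀ (M : Type v) [AddCommGroup M] [Module k M] [Module A M] [IsScalarTower k A M],
    Function.Injective (unitMap k B A M) ∧
    Set.range (unitMap k B A M) =
      {t | ∃ t₀ : B ⊗[k] M, (modRel k B A M).mkQ t₀ = t ∧ diffMap k B A M t₀ ∈ modRel2 k B A M}

end Extension

section ConditionalExpectation

variable {k : Type*} [Field k] {B : Type*} [Ring B] [Algebra k B] {A : Subalgebra k B}
  (E : B →ₗ[k] A)

/-- On `N = M` this induces the retraction `B ⊗_A M → M` of the unit map; on `N = B ⊗[k] M`,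
where `A` acts through the left factor, the contraction `B ⊗_A B ⊗_A M → B ⊗_A M`,
`x ⊗ y ⊗ m ↦ E x y ⊗ m`. -/
def expectationAction (N : Type*) [AddCommGroup N] [Module k N] [Module A N]
    [IsScalarTower k A N] : B ⊗[k] N →ₗ[k] N :=
  TensorProduct.lift ((Algebra.lsmul k k N).toLinearMap ∘ₗ E)

@[simp]
lemma expectationAction_tmul (N : Type*) [AddCommGroup N] [Module k N] [Module A N]
    [IsScalarTower k A N] (x : B) (n : N) :
    expectationAction E N (x ⊗ₜ n) = E x • n :=
  rfl

variable (M : Type v) [AddCommGroup M] [Module k M] [Module A M] [IsScalarTower k A M]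

lemma modRel_le_ker_expectationAction (hE_lin : ∀ (b : B) (a : A), E (b * (a : B)) = E b * a) :
    modRel k B A M ≤ LinearMap.ker (expectationAction E M) := by
  rw [modRel, Submodule.span_le]
  rintro _ ⟨b, a, m, rfl⟩
  simp [hE_lin, mul_smul]

lemma unitMap_injective (hE1 : E 1 = 1)
    (hE_lin : ∀ (b : B) (a : A), E (b * (a : B)) = E b * a) :
    Function.Injective (unitMap k B A M) :=
  Function.LeftInverse.injective (g := (modRel k B A M).liftQ (expectationAction E M)
    (modRel_le_ker_expectationAction E M hE_lin)) fun m => by simp [unitMap, hE1]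

lemma diffMap_one_tmul (m : M) : diffMap k B A M (1 ⊗ₜ m) = 0 := by
  simp [diffMap]

lemma modRel2_le_comap_expectationAction
    (hE_lin : ∀ (b : B) (a : A), E (b * (a : B)) = E b * a) :
    modRel2 k B A M ≤ (modRel k B A M).comap (expectationAction E (B ⊗[k] M)) := by
  rw [modRel2, Submodule.span_le]
  rintro _ (⟨x, a, y, m, rfl⟩ | ⟨x, y, a, m, rfl⟩)
  · simp [Subalgebra.smul_def, smul_tmul', hE_lin, mul_assoc]
  · simp only [SetLike.mem_coe, Submodule.mem_comap, map_sub, expectationAction_tmul,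
      Subalgebra.smul_def, smul_tmul', smul_eq_mul, ← mul_assoc]
    exact Submodule.subset_span ⟨_, a, m, rfl⟩

lemma expectationAction_diffMap (hE1 : E 1 = 1) (t : B ⊗[k] M) :
    expectationAction E (B ⊗[k] M) (diffMap k B A M t) =
      (A.val.toLinearMap ∘ₗ E).rTensor M t - t := by
  induction t using TensorProduct.induction_on with
  | zero => simp
  | tmul x m => simp [diffMap, Subalgebra.smul_def, smul_tmul', hE1]
  | add t t' ht ht' => rw [map_add, map_add, ht, ht', map_add]; abel

lemma rTensor_expectation_sub_mem_modRel (t : B ⊗[k] M) :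
    (A.val.toLinearMap ∘ₗ E).rTensor M t - 1 ⊗ₜ expectationAction E M t ∈ modRel k B A M := by
  induction t using TensorProduct.induction_on with
  | zero => simp
  | tmul x m => exact Submodule.subset_span ⟨1, E x, m, by simp⟩
  | add t t' ht ht' =>
    rw [map_add, map_add, tmul_add, add_sub_add_comm]
    exact add_mem ht ht'

lemma unitMap_expectationAction_of_diffMap_mem (hE1 : E 1 = 1)
    (hE_lin : ∀ (b : B) (a : A), E (b * (a : B)) = E b * a) {t : B ⊗[k] M}
    (ht : diffMap k B A M t ∈ modRel2 k B A M) :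
    unitMap k B A M (expectationAction E M t) = (modRel k B A M).mkQ t := by
  have hcontract := modRel2_le_comap_expectationAction E M hE_lin ht
  rw [Submodule.mem_comap, expectationAction_diffMap E M hE1] at hcontract
  rw [unitMap, LinearMap.comp_apply, TensorProduct.mk_apply, Submodule.mkQ_apply,
    Submodule.mkQ_apply, Submodule.Quotient.eq]
  convert sub_mem hcontract (rTensor_expectation_sub_mem_modRel E M t) using 1
  abel

end ConditionalExpectation

/-- Let `A ⊆ B` be an algebra extension over a field `k`.  If `A` is a direct
summand of `B` as a right `A`-module (equivalently, there is a right `A`-linear map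
`E : B → A` with `E|_A = id`), then the extension `A ⊆ B` is right faithfully flatish. -/
theorem rightFaithfullyFlatish_of_conditionalExpectation
    {k : Type*} [Field k] {B : Type*} [Ring B] [Algebra k B]
    (A : Subalgebra k B)
    (E : B →ₗ[k] A) (hE_id : ∀ a : A, E (a : B) = a)
    (hE_lin : ∀ (b : B) (a : A), E (b * (a : B)) = E b * a) :
    IsRightFaithfullyFlatish.{v} k B A := by
  have hE1 : E 1 = 1 := by simpa using hE_id 1
  intro M _ _ _ _
  refine ⟨unitMap_injective E M hE1 hE_lin, Set.ext fun t => ⟨?_, ?_⟩⟩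
  · rintro ⟨m, rfl⟩
    exact ⟨1 ⊗ₜ m, rfl, by rw [diffMap_one_tmul]; exact zero_mem _⟩
  · rintro ⟨t, rfl, ht⟩
    exact ⟨_, unitMap_expectationAction_of_diffMap_mem E M hE1 hE_lin ht⟩
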